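/- If a stratified Lie algebra g of type (◇) admits a step-2 subalgebra h such that h ∩ V_1 has codimension 1 in V_1, then g is of type (⋆). -/

import Mathlib

/-- The span of all brackets `⁅x, y⁆` with `x ∈ A` and `y ∈ B`. -/
def lieSpan {L : Type} [LieRing L] [LieAlgebra ℝ L] (A B : Submodule ℝ L) :
    Submodule ℝ L :=
  Submodule.span ℝ {z : L | ∃ x ∈ A, ∃ y ∈ B, z = ⁅x, y⁆}

/-- A stratification of step `s` on a Lie algebra `L`: a decomposition
`L = V 1 ⊕ ⋯ ⊕ V s` (the direct sum being recorded by spanning and independence)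
with `[V 1, V j] = V (j+1)` for `1 ≤ j < s`, `[V 1, V s] = 0` and `V s ≠ 0`.
Layers of index `0` or `> s` are trivial. -/
structure IsStratified (L : Type) [LieRing L] [LieAlgebra ℝ L]
    (s : ℕ) (V : ℕ → Submodule ℝ L) : Prop where
  pos : 0 < s
  last_ne_bot : V s ≠ ⊥
  zero_bot : V 0 = ⊥
  gt_bot : ∀ j, s < j → V j = ⊥
  iSup_eq_top : (⨆ j, V j) = ⊤
  indep : ∀ j, Disjoint (V j) (⨆ k, ⨆ _ : k ≠ j, V k)
  layer : ∀ j, 1 ≤ j → j < s → lieSpan (V 1) (V j) = V (j + 1)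
  last : lieSpan (V 1) (V s) = ⊥

/-- `X : Fin m → L` is a basis of the first layer `V 1`. -/
def IsBasisOfV1 {L : Type} [LieRing L] [LieAlgebra ℝ L]
    (V : ℕ → Submodule ℝ L) {m : ℕ} (X : Fin m → L) : Prop :=
  (∀ i, X i ∈ V 1) ∧ LinearIndependent ℝ X ∧ Submodule.span ℝ (Set.range X) = V 1

/-- A stratified Lie algebra is of type `(⋆)` if some basis `{X₁,…,Xₘ}` of `V 1`
satisfies `ad_{Xᵢ}² Xⱼ = 0` for all `i, j`. -/
def IsTypeStar {L : Type} [LieRing L] [LieAlgebra ℝ L]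
    (V : ℕ → Submodule ℝ L) : Prop :=
  ∃ (m : ℕ) (X : Fin m → L), IsBasisOfV1 V X ∧ ∀ i j, ⁅X i, ⁅X i, X j⁆⁆ = 0

/-- A stratified Lie algebra is of type `(◇)` if for every Lie subalgebra `h` such that
`h ∩ V 1` has codimension `1` in `V 1` there is a basis `{X₁,…,Xₘ}` of `V 1` with
`ad_{Xᵢ}² Xⱼ ∈ h` and `ad_{ad_{Xᵢ}^k Xⱼ}² (Xᵢ) ∈ h` for all `i, j` and all `k ≥ 2`. -/
def IsTypeDiamond {L : Type} [LieRing L] [LieAlgebra ℝ L]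
    (V : ℕ → Submodule ℝ L) : Prop :=
  ∀ h : LieSubalgebra ℝ L,
    Module.finrank ℝ ↥(h.toSubmodule ⊓ V 1) + 1 = Module.finrank ℝ ↥(V 1) →
    ∃ (m : ℕ) (X : Fin m → L), IsBasisOfV1 V X ∧
      ∀ i j, ⁅X i, ⁅X i, X j⁆⁆ ∈ h ∧
        ∀ k : ℕ, 2 ≤ k →
          ⁅((LieAlgebra.ad ℝ L (X i)) ^ k) (X j),
            ⁅((LieAlgebra.ad ℝ L (X i)) ^ k) (X j), X i⁆⁆ ∈ h

/-! In a stratified Lie algebra `ad_{X}² Y` lies in the third layer whenever `X, Y ∈ V 1`.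
Type `(◇)`, applied to the given subalgebra `h`, yields a basis of `V 1` with all
`ad_{Xᵢ}² Xⱼ ∈ h`; these then lie in `h ∩ V 3 = 0`, so the same basis witnesses type `(⋆)`. -/

theorem lie_mem_lieSpan {L : Type} [LieRing L] [LieAlgebra ℝ L] {A B : Submodule ℝ L}
    {x y : L} (hx : x ∈ A) (hy : y ∈ B) : ⁅x, y⁆ ∈ lieSpan A B :=
  Submodule.subset_span ⟨x, hx, y, hy, rfl⟩

namespace IsStratified

variable {L : Type} [LieRing L] [LieAlgebra ℝ L] {s : ℕ} {V : ℕ → Submodule ℝ L}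

theorem lie_mem_succ (hst : IsStratified L s V) {x y : L} {j : ℕ} (hx : x ∈ V 1)
    (hy : y ∈ V j) : ⁅x, y⁆ ∈ V (j + 1) := by
  have hxy := lie_mem_lieSpan hx hy
  rcases Nat.eq_zero_or_pos j with rfl | hj
  · rw [hst.zero_bot, Submodule.mem_bot] at hy
    simp [hy]
  rcases lt_trichotomy j s with hjs | rfl | hsj
  · rwa [hst.layer j hj hjs] at hxy
  · rw [hst.last, Submodule.mem_bot] at hxy
    simp [hxy]
  · rw [hst.gt_bot j hsj, Submodule.mem_bot] at hy
    simp [hy]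

theorem lie_lie_mem_three (hst : IsStratified L s V) {x y z : L} (hx : x ∈ V 1)
    (hy : y ∈ V 1) (hz : z ∈ V 1) : ⁅x, ⁅y, z⁆⁆ ∈ V 3 :=
  hst.lie_mem_succ hx (hst.lie_mem_succ hy hz)

end IsStratified

theorem typeDiamond_with_step_two_codim_one_subalgebra_is_typeStar_general
    (L : Type) [LieRing L] [LieAlgebra ℝ L]
    (s : ℕ) (V : ℕ → Submodule ℝ L) (hst : IsStratified L s V)
    (hdiamond : IsTypeDiamond V)
    (h : LieSubalgebra ℝ L)
    (hcodim : Module.finrank ℝ ↥(h.toSubmodule ⊓ V 1) + 1 = Module.finrank ℝ ↥(V 1))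
    (hstep2 : h.toSubmodule ⊓ V 3 = ⊥) :
    IsTypeStar V := by
  obtain ⟨m, X, hbasis, hX⟩ := hdiamond h hcodim
  refine ⟨m, X, hbasis, fun i j => ?_⟩
  have hmem : ⁅X i, ⁅X i, X j⁆⁆ ∈ h.toSubmodule ⊓ V 3 :=
    ⟨(hX i j).1, hst.lie_lie_mem_three (hbasis.1 i) (hbasis.1 i) (hbasis.1 j)⟩
  rwa [hstep2, Submodule.mem_bot] at hmem

/-- If a stratified Lie algebra `g` of type `(◇)` admits a step-2 subalgebra `h`
(i.e., one whose third layer is trivial: `h ⊓ V 3 = ⊥`) such that `h ∩ V 1` has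
codimension `1` in `V 1`, then `g` is of type `(⋆)`. -/
theorem typeDiamond_with_step_two_codim_one_subalgebra_is_typeStar
    (L : Type) [LieRing L] [LieAlgebra ℝ L] [FiniteDimensional ℝ L]
    (s : ℕ) (V : ℕ → Submodule ℝ L) (hst : IsStratified L s V)
    (hdiamond : IsTypeDiamond V)
    (h : LieSubalgebra ℝ L)
    (hcodim : Module.finrank ℝ ↥(h.toSubmodule ⊓ V 1) + 1 = Module.finrank ℝ ↥(V 1))
    (hstep2 : h.toSubmodule ⊓ V 3 = ⊥) :
    IsTypeStar V :=
  typeDiamond_with_step_two_codim_one_subalgebra_is_typeStar_general L s V hst hdiamond h hcodim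
    hstep2
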